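/- Let φ be a Positive-NAE-3SAT instance with variables x₁,…,x_n and let φ' be obtained from φ by adding two fresh variables y, z and, for each i, the clause (x_i, y, z). Then φ' is connected, and the number of NAE-satisfying assignments of φ' equals exactly twice the number of NAE-satisfying assignments of φ. -/

import Mathlib

/-!
Call the added clauses `(x, y, z)` hub clauses. Every clause of `φ` shares its first variable
with a hub clause, and all hub clauses share `y`, so no nontrivial partition of the clauses of
`φ'` separates their variables. A hub clause is NAE-satisfied as soon as `y` and `z` get
different values; conversely, if they got the same value `v`, every variable of `φ` would have
to be `¬v`, violating any clause of the nonempty `φ`. So the solutions of `φ'` are exactly the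
solutions of `φ` together with a free value for `y` and the opposite one for `z`.
-/

def NAEClause {α : Type*} (a : α → Bool) (c : α × α × α) : Prop :=
  ¬ (a c.1 = a c.2.1 ∧ a c.2.1 = a c.2.2)

def NAESat {α : Type*} (φ : List (α × α × α)) (a : α → Bool) : Prop :=
  ∀ c ∈ φ, NAEClause a c

def NAEVars {α : Type*} (φ : List (α × α × α)) : Set α :=
  {x | ∃ c ∈ φ, x = c.1 ∨ x = c.2.1 ∨ x = c.2.2}

/-- `φ` is connected: for every nontrivial partition of its clause set, some
variable occurs in clauses on both sides. -/
def NAEConnected {α : Type*} [DecidableEq α] (φ : List (α × α × α)) : Prop :=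
  ∀ S : Finset (α × α × α), S ⊆ φ.toFinset → S.Nonempty → S ≠ φ.toFinset →
    ∃ (x : α) (c c' : α × α × α), c ∈ S ∧ c' ∈ φ.toFinset ∧ c' ∉ S ∧
      (x = c.1 ∨ x = c.2.1 ∨ x = c.2.2) ∧
      (x = c'.1 ∨ x = c'.2.1 ∨ x = c'.2.2)

section NAE

variable {α : Type*}

def Occurs (x : α) (c : α × α × α) : Prop :=
  x = c.1 ∨ x = c.2.1 ∨ x = c.2.2

def NAESols (φ : List (α × α × α)) : Type _ :=
  {a : α → Bool // NAESat φ a ∧ ∀ x ∉ NAEVars φ, a x = false}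

theorem NAESat.of_eqOn {φ : List (α × α × α)} {a b : α → Bool}
    (hab : Set.EqOn a b (NAEVars φ)) (ha : NAESat φ a) : NAESat φ b := by
  intro c hc
  rw [NAEClause, ← hab ⟨c, hc, Or.inl rfl⟩, ← hab ⟨c, hc, Or.inr (Or.inl rfl)⟩,
    ← hab ⟨c, hc, Or.inr (Or.inr rfl)⟩]
  exact ha c hc

theorem NAESat.exists_mem_NAEVars_eq {φ : List (α × α × α)} {a : α → Bool} (hφ : φ ≠ [])
    (ha : NAESat φ a) (v : Bool) : ∃ x ∈ NAEVars φ, a x = v := by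
  obtain ⟨c, hc⟩ := List.exists_mem_of_ne_nil φ hφ
  have hnae := ha c hc
  by_contra! hv
  have h₁ := hv c.1 ⟨c, hc, Or.inl rfl⟩
  have h₂ := hv c.2.1 ⟨c, hc, Or.inr (Or.inl rfl)⟩
  have h₃ := hv c.2.2 ⟨c, hc, Or.inr (Or.inr rfl)⟩
  rw [← Bool.eq_not] at h₁ h₂ h₃
  exact hnae ⟨h₁.trans h₂.symm, h₂.trans h₃.symm⟩

theorem NAEVars_append (φ ψ : List (α × α × α)) :
    NAEVars (φ ++ ψ) = NAEVars φ ∪ NAEVars ψ := by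
  ext x
  simp only [NAEVars, List.mem_append, Set.mem_union, Set.mem_ofPred_eq]
  grind

theorem NAEConnected.of_forall_exists_hub [DecidableEq α] {φ : List (α × α × α)} (y : α)
    (h : ∀ c ∈ φ, ∃ c' ∈ φ, Occurs y c' ∧ ∃ x, Occurs x c ∧ Occurs x c') :
    NAEConnected φ := by
  intro S hS ⟨c, hcS⟩ hSφ
  obtain ⟨c', hc'φ, hc'S⟩ := Finset.exists_of_ssubset (hS.ssubset_of_ne hSφ)
  obtain ⟨h₁, h₁φ, hy₁, x₁, hx₁c, hx₁h⟩ := h c (List.mem_toFinset.1 (hS hcS))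
  obtain ⟨h₂, h₂φ, hy₂, x₂, hx₂c, hx₂h⟩ := h c' (List.mem_toFinset.1 hc'φ)
  by_cases hh₁ : h₁ ∈ S
  · by_cases hh₂ : h₂ ∈ S
    · exact ⟨x₂, h₂, c', hh₂, hc'φ, hc'S, hx₂h, hx₂c⟩
    · exact ⟨y, h₁, h₂, hh₁, List.mem_toFinset.2 h₂φ, hh₂, hy₁, hy₂⟩
  · exact ⟨x₁, c, h₁, hcS, List.mem_toFinset.2 h₁φ, hh₁, hx₁c, hx₁h⟩

section Split

variable [DecidableEq α] {φ ψ : List (α × α × α)} {y z : α}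

theorem eqOn_update_update {s : Set α} (hy : y ∉ s) (hz : z ∉ s) (f : α → Bool) (u v : Bool) :
    Set.EqOn (Function.update (Function.update f y u) z v) f s := fun x hx => by
  rw [Function.update_of_ne (ne_of_mem_of_not_mem hx hz),
    Function.update_of_ne (ne_of_mem_of_not_mem hx hy)]

def NAESols.splitEquiv (hy : y ∉ NAEVars φ) (hz : z ∉ NAEVars φ) (hyz : y ≠ z)
    (hvars : NAEVars ψ = NAEVars φ ∪ {y, z})
    (hsat : ∀ a, NAESat ψ a ↔ NAESat φ a ∧ a y ≠ a z) :
    NAESols ψ ≃ NAESols φ × Bool where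
  toFun a := (⟨Function.update (Function.update a.1 y false) z false,
    ((hsat a.1).1 a.2.1).1.of_eqOn (eqOn_update_update hy hz _ _ _).symm, fun x hx => by
      by_cases hxz : x = z
      · simp [hxz]
      by_cases hxy : x = y
      · simp [hxy, hyz]
      rw [Function.update_of_ne hxz, Function.update_of_ne hxy]
      exact a.2.2 x (by simp [hvars, hx, hxy, hxz])⟩, a.1 y)
  invFun p := ⟨Function.update (Function.update p.1.1 y p.2) z (!p.2),
    (hsat _).2 ⟨p.1.2.1.of_eqOn (eqOn_update_update hy hz _ _ _).symm, by simp [hyz]⟩,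
    fun x hx => by
      simp only [hvars, Set.mem_union, Set.mem_insert_iff, Set.mem_singleton_iff, not_or] at hx
      rw [Function.update_of_ne hx.2.2, Function.update_of_ne hx.2.1]
      exact p.1.2.2 x hx.1⟩
  left_inv a := by
    have hne := ((hsat a.1).1 a.2.1).2
    refine Subtype.ext (funext fun x => ?_)
    by_cases hxz : x = z
    · subst hxz
      simpa using Bool.eq_not.2 hne
    by_cases hxy : x = y
    · subst hxy
      simp [hxz]
    simp [hxz, hxy]
  right_inv p := by
    refine Prod.ext (Subtype.ext (funext fun x => ?_)) (by simp [hyz])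
    by_cases hxz : x = z
    · subst hxz
      simp [p.1.2.2 x hz]
    by_cases hxy : x = y
    · subst hxy
      simp [hxz, p.1.2.2 x hy]
    simp [hxz, hxy]

theorem NAESols.card_eq_two_mul (hy : y ∉ NAEVars φ) (hz : z ∉ NAEVars φ) (hyz : y ≠ z)
    (hvars : NAEVars ψ = NAEVars φ ∪ {y, z})
    (hsat : ∀ a, NAESat ψ a ↔ NAESat φ a ∧ a y ≠ a z) :
    Nat.card (NAESols ψ) = 2 * Nat.card (NAESols φ) := by
  rw [Nat.card_congr (splitEquiv hy hz hyz hvars hsat), Nat.card_prod,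
    Nat.card_eq_fintype_card (α := Bool), Fintype.card_bool, mul_comm]

end Split

section Hub

variable {φ : List (α × α × α)} {xs : List α} {y z : α}

theorem NAEVars_map_hub (hxs : xs ≠ []) :
    NAEVars (xs.map (fun x => (x, y, z))) = {x | x ∈ xs} ∪ {y, z} := by
  obtain ⟨w, hw⟩ := List.exists_mem_of_ne_nil xs hxs
  ext x
  simp only [NAEVars, List.mem_map, Set.mem_union, Set.mem_insert_iff, Set.mem_singleton_iff,
    Set.mem_ofPred_eq]
  grind

theorem naeSat_append_hub_iff (hφ : φ ≠ []) (hxs : ∀ x ∈ NAEVars φ, x ∈ xs) (a : α → Bool) :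
    NAESat (φ ++ xs.map (fun x => (x, y, z))) a ↔ NAESat φ a ∧ a y ≠ a z := by
  simp only [NAESat, List.forall_mem_append, List.forall_mem_map]
  refine ⟨fun ⟨hsat, hhub⟩ => ⟨hsat, fun hyz => ?_⟩, fun ⟨hsat, hyz⟩ => ⟨hsat, fun _ _ h => hyz h.2⟩⟩
  -- if `a y = a z`, each hub clause `(x, y, z)` forces `a x ≠ a y` on all variables of `φ`
  obtain ⟨x, hx, hax⟩ := NAESat.exists_mem_NAEVars_eq hφ hsat (a y)
  exact hhub x (hxs x hx) ⟨hax, hyz⟩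

theorem NAEVars_append_hub (hφ : φ ≠ []) (hxs : ∀ x, x ∈ xs ↔ x ∈ NAEVars φ) :
    NAEVars (φ ++ xs.map (fun x => (x, y, z))) = NAEVars φ ∪ {y, z} := by
  obtain ⟨c, hc⟩ := List.exists_mem_of_ne_nil φ hφ
  have hxs_ne : xs ≠ [] := List.ne_nil_of_mem ((hxs c.1).2 ⟨c, hc, Or.inl rfl⟩)
  have hxs_eq : {x | x ∈ xs} = NAEVars φ := Set.ext hxs
  rw [NAEVars_append, NAEVars_map_hub hxs_ne, hxs_eq, ← Set.union_assoc, Set.union_self]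

theorem naeConnected_append_hub [DecidableEq α] (hxs : ∀ x ∈ NAEVars φ, x ∈ xs) :
    NAEConnected (φ ++ xs.map (fun x => (x, y, z))) := by
  refine NAEConnected.of_forall_exists_hub y fun c hc => ?_
  rcases List.mem_append.1 hc with hc | hc
  · refine ⟨(c.1, y, z), List.mem_append_right _ (List.mem_map_of_mem ?_),
      Or.inr (Or.inl rfl), c.1, Or.inl rfl, Or.inl rfl⟩
    exact hxs c.1 ⟨c, hc, Or.inl rfl⟩
  · obtain ⟨w, hw, rfl⟩ := List.mem_map.1 hc
    exact ⟨_, List.mem_append_right _ (List.mem_map_of_mem hw), Or.inr (Or.inl rfl), y,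
      Or.inr (Or.inl rfl), Or.inr (Or.inl rfl)⟩

end Hub

end NAE

/-- Adding two fresh variables `y, z` and, for each variable `x` of `φ`, the
clause `(x, y, z)`, yields a connected instance `φ'` with exactly twice as many
NAE-satisfying assignments as `φ`. -/
theorem naesat_connectification {α : Type*} [DecidableEq α]
    (φ : List (α × α × α)) (hne : φ ≠ [])
    (xs : List α) (hxs : ∀ x, x ∈ xs ↔ x ∈ NAEVars φ)
    (y z : α) (hy : y ∉ NAEVars φ) (hz : z ∉ NAEVars φ) (hyz : y ≠ z) :
    NAEConnected (φ ++ xs.map (fun x => (x, y, z))) ∧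
    Nat.card {a : α → Bool //
        NAESat (φ ++ xs.map (fun x => (x, y, z))) a ∧
        ∀ x ∉ NAEVars (φ ++ xs.map (fun x => (x, y, z))), a x = false} =
      2 * Nat.card {a : α → Bool //
        NAESat φ a ∧ ∀ x ∉ NAEVars φ, a x = false} := by
  have hvars_sub : ∀ x ∈ NAEVars φ, x ∈ xs := fun x hx => (hxs x).2 hx
  exact ⟨naeConnected_append_hub hvars_sub,
    NAESols.card_eq_two_mul hy hz hyz (NAEVars_append_hub hne hxs)
      (naeSat_append_hub_iff hne hvars_sub)⟩
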